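/- arXiv:2002.10505 — 3 statements merged into one kernel-verified Lean document; each statement's English description precedes it below -/
import Mathlib

section
/- For every t ≤ T, the difference between the closed-loop perturbation state and the linear perturbation state, ε ↦ δx_t(ε) − δx^l_t(ε), is O(ε²) as ε → 0. (Lemma 1, first part: the state perturbation of the nonlinear closed loop agrees with that of its linearization up to a second-order error in the noise scale ε, along any fixed noise sample path.) -/
/-!
By Taylor's theorem a `C²` function vanishing to first order at `0` is `O(x²)` there, so it
turns an `O(ε)` argument into an `O(ε²)` value. Induction on `t` then shows simultaneously that
`δx_t = O(ε)` and, since `δx_{t+1} − δx^l_{t+1} = Ā_t (δx_t − δx^l_t) + S̄_t(δx_t)`, that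
`δx_t − δx^l_t = O(ε²)`.
-/

open Asymptotics Filter Topology

theorem ContDiff.isBigO_sub_sq_of_deriv_eq_zero {E : Type*} [NormedAddCommGroup E]
    [NormedSpace ℝ E] {f : ℝ → E} {x₀ : ℝ} (hf : ContDiff ℝ 2 f) (h0 : f x₀ = 0)
    (h1 : deriv f x₀ = 0) : f =O[𝓝 x₀] fun x => (x - x₀) ^ 2 := by
  have htaylor : taylorWithinEval f 2 Set.univ x₀ =
      fun x => (2⁻¹ * (x - x₀) ^ 2) • iteratedDeriv 2 f x₀ := by
    ext x
    simp [taylor_within_apply, iteratedDerivWithin_univ, h0, h1, one_add_one_eq_two]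
  have hremainder := (taylor_isLittleO_univ (x₀ := x₀) hf).isBigO
  rw [htaylor] at hremainder
  have hpoly : (fun x => (2⁻¹ * (x - x₀) ^ 2) • iteratedDeriv 2 f x₀) =O[𝓝 x₀]
      fun x => (x - x₀) ^ 2 :=
    isBigO_of_le' (c := ‖(2 : ℝ)⁻¹‖ * ‖iteratedDeriv 2 f x₀‖) _ fun x => le_of_eq <| by
      rw [norm_smul, norm_mul]
      ring
  simpa using hremainder.add hpoly

theorem Asymptotics.IsBigO.comp_isBigO_sq {α E : Type*} [NormedAddCommGroup E] {l : Filter α}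
    {g : ℝ → E} {u v : α → ℝ} (hg : g =O[𝓝 0] fun x => x ^ 2) (hu : u =O[l] v)
    (hv : Tendsto v l (𝓝 0)) : (fun a => g (u a)) =O[l] fun a => v a ^ 2 :=
  (hg.comp_tendsto (hu.trans_tendsto hv)).trans (hu.pow 2)

/-- Lemma 1, first part: along any fixed noise sample path, the closed-loop perturbation
state of the nonlinear system agrees with the perturbation state of its linearization up to
an `O(ε²)` error as the noise scale `ε → 0`, for every time `t ≤ T`. -/
theorem closed_loop_perturbation_isBigO_sq
    (T : ℕ) (A : ℕ → ℝ) (S : ℕ → ℝ → ℝ)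
    (hS : ∀ t < T, ContDiff ℝ 2 (S t))
    (hS0 : ∀ t < T, S t 0 = 0)
    (hS1 : ∀ t < T, deriv (S t) 0 = 0)
    (w : ℕ → ℝ)
    (δx δxl : ℝ → ℕ → ℝ)
    (hx0 : ∀ ε, δx ε 0 = 0)
    (hx : ∀ ε, ∀ t < T, δx ε (t + 1) = A t * δx ε t + S t (δx ε t) + ε * w t)
    (hl0 : ∀ ε, δxl ε 0 = 0)
    (hl : ∀ ε, ∀ t < T, δxl ε (t + 1) = A t * δxl ε t + ε * w t) :
    ∀ t ≤ T, (fun ε : ℝ => δx ε t - δxl ε t) =O[nhds (0 : ℝ)] (fun ε : ℝ => ε ^ 2) := by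
  suffices ∀ t ≤ T, (fun ε => δx ε t) =O[𝓝 0] (fun ε => ε) ∧
      (fun ε => δx ε t - δxl ε t) =O[𝓝 0] (fun ε => ε ^ 2) from fun t ht => (this t ht).2
  intro t
  induction t with
  | zero => simpa [hx0, hl0] using ⟨isBigO_zero _ _, isBigO_zero _ _⟩
  | succ t ih =>
    intro ht
    obtain ⟨hstate, hdiff⟩ := ih (by omega)
    have hS_sq : S t =O[𝓝 0] fun x => x ^ 2 := by
      simpa using (hS t ht).isBigO_sub_sq_of_deriv_eq_zero (hS0 t ht) (hS1 t ht)
    have hquad : (fun ε => S t (δx ε t)) =O[𝓝 0] fun ε => ε ^ 2 :=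
      hS_sq.comp_isBigO_sq hstate tendsto_id
    refine ⟨?_, ?_⟩
    · simp only [hx _ t ht]
      exact ((hstate.const_mul_left _).add (hquad.trans (isLittleO_pow_id one_lt_two).isBigO)).add
        ((isBigO_const_mul_self (w t) _ _).congr_left fun ε => mul_comm _ _)
    · have hstep : (fun ε => δx ε (t + 1) - δxl ε (t + 1)) =
          fun ε => A t * (δx ε t - δxl ε t) + S t (δx ε t) := by
        funext ε
        rw [hx ε t ht, hl ε t ht]
        ring
      rw [hstep]
      exact (hdiff.const_mul_left _).add hquad
end

section
/- Assume additionally that each S̄_t is three times continuously differentiable, and define the second-order error sequence e^{(2)}_t(ε) by e^{(2)}_0(ε) = 0 and e^{(2)}_{t+1}(ε) = Ā_t e^{(2)}_t(ε) + (1/2) S̄_t″(0) (δx^l_t(ε))². Then for every t ≤ T, the function ε ↦ δx_t(ε) − δx^l_t(ε) − e^{(2)}_t(ε) is O(ε³) as ε → 0. (Lemma 1, second part: the nonlinear perturbation state equals the linear state plus an explicitly recursively computable quadratic correction, up to a third-order error in ε.) -/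
open Asymptotics Filter Set Topology

/-!
Subtracting the recursions, each of the sequences `δx`, `δx - δxl` and `δx - δxl - e2` obeys
`a_{t+1} = A_t a_t + f_t`, and such a sequence is `O(g)` over a finite horizon once its forcing
`f_t` is. Since `S_t` vanishes to second order, `δx = O(ε)`, and the forcing of `δx - δxl` is
`S_t(δx) = O(ε²)`. For the last sequence the forcing is
`[S_t(δx) - ½ S_t''(0) δx²] + ½ S_t''(0) (δx - δxl)(δx + δxl)`: the first bracket is `O(ε³)`
by Taylor's theorem for the `C³` function `S_t`, the second is `O(ε²)·O(ε)`.
-/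

theorem isBigO_sub_taylorWithinEval_univ {E : Type*} [NormedAddCommGroup E] [NormedSpace ℝ E]
    {f : ℝ → E} {x₀ : ℝ} {n : ℕ} (hf : ContDiff ℝ (n + 1) f) :
    (fun x => f x - taylorWithinEval f n univ x₀ x) =O[𝓝 x₀] fun x => (x - x₀) ^ (n + 1) := by
  have hnext : (fun x => f x - taylorWithinEval f (n + 1) univ x₀ x)
      =O[𝓝 x₀] fun x => (x - x₀) ^ (n + 1) := by
    exact_mod_cast (taylor_isLittleO_univ hf).isBigO
  have hterm : (fun x => (((n + 1 : ℝ) * n.factorial)⁻¹ * (x - x₀) ^ (n + 1)) •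
      iteratedDerivWithin (n + 1) f univ x₀) =O[𝓝 x₀] fun x => (x - x₀) ^ (n + 1) := by
    simpa using ((isBigO_refl (fun x => (x - x₀) ^ (n + 1)) _).const_mul_left
      ((n + 1 : ℝ) * n.factorial)⁻¹).smul
      (isBigO_const_const (iteratedDerivWithin (n + 1) f univ x₀) (one_ne_zero (α := ℝ)) (𝓝 x₀))
  refine (hnext.add hterm).congr_left fun x => ?_
  rw [taylorWithinEval_succ]
  abel

theorem isBigO_sq_of_deriv_eq_zero {f : ℝ → ℝ} (hf : ContDiff ℝ 2 f) (h0 : f 0 = 0)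
    (h1 : deriv f 0 = 0) : f =O[𝓝 0] fun x => x ^ 2 := by
  simpa [taylor_within_apply, Finset.sum_range_succ, h0, h1] using
    isBigO_sub_taylorWithinEval_univ (n := 1) (x₀ := 0) hf

theorem isBigO_sub_half_iteratedDeriv_two_mul_sq {f : ℝ → ℝ} (hf : ContDiff ℝ 3 f)
    (h0 : f 0 = 0) (h1 : deriv f 0 = 0) :
    (fun x => f x - 1 / 2 * iteratedDeriv 2 f 0 * x ^ 2) =O[𝓝 0] fun x => x ^ 3 := by
  have htaylor (x : ℝ) : taylorWithinEval f 2 univ 0 x = 1 / 2 * iteratedDeriv 2 f 0 * x ^ 2 := by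
    simp [taylor_within_apply, h0, h1]
    ring
  simpa only [htaylor, sub_zero] using isBigO_sub_taylorWithinEval_univ (n := 2) (x₀ := 0) hf

theorem Asymptotics.IsBigO.comp_isBigO_pow {α : Type*} {l : Filter α} {f : ℝ → ℝ} {n : ℕ}
    (hf : f =O[𝓝 0] fun x => x ^ n) {u g : α → ℝ} (hu : u =O[l] g) (hg : Tendsto g l (𝓝 0)) :
    (fun a => f (u a)) =O[l] fun a => g a ^ n :=
  (hf.comp_tendsto (hu.trans_tendsto hg)).trans (hu.pow n)

theorem isBigO_of_linear_recursion {α : Type*} {l : Filter α} {g : α → ℝ} {T : ℕ} {A : ℕ → ℝ}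
    {x : α → ℕ → ℝ} (h0 : (fun a => x a 0) =O[l] g)
    (hstep : ∀ t < T, (fun a => x a t) =O[l] g → (fun a => x a (t + 1) - A t * x a t) =O[l] g) :
    ∀ t ≤ T, (fun a => x a t) =O[l] g := by
  intro t ht
  induction t with
  | zero => exact h0
  | succ t ih =>
    have hx := ih (by omega)
    simpa using (hstep t (by omega) hx).add (hx.const_mul_left (A t))

section ClosedLoop

variable {T : ℕ} {A : ℕ → ℝ} {S : ℕ → ℝ → ℝ} {w : ℕ → ℝ} {δx δxl : ℝ → ℕ → ℝ}

theorem closedLoop_isBigO_id (hS : ∀ t < T, S t =O[𝓝 0] fun x => x ^ 2)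
    (hx0 : ∀ ε, δx ε 0 = 0)
    (hx : ∀ ε, ∀ t < T, δx ε (t + 1) = A t * δx ε t + S t (δx ε t) + ε * w t) :
    ∀ t ≤ T, (fun ε => δx ε t) =O[𝓝 0] fun ε => ε := by
  refine isBigO_of_linear_recursion (A := A) (by simpa [hx0] using isBigO_zero _ _)
    fun t ht hδx => ?_
  have hnonlin : (fun ε => S t (δx ε t)) =O[𝓝 0] fun ε : ℝ => ε :=
    ((hS t ht).comp_isBigO_pow hδx tendsto_id).trans (isLittleO_pow_id one_lt_two).isBigO
  have hnoise : (fun ε => ε * w t) =O[𝓝 0] fun ε : ℝ => ε :=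
    (isBigO_const_mul_self (w t) _ _).congr_left fun ε => mul_comm _ _
  refine (hnonlin.add hnoise).congr_left fun ε => ?_
  rw [hx ε t ht]
  ring

theorem closedLoop_sub_linear_isBigO_sq (hS : ∀ t < T, S t =O[𝓝 0] fun x => x ^ 2)
    (hx0 : ∀ ε, δx ε 0 = 0)
    (hx : ∀ ε, ∀ t < T, δx ε (t + 1) = A t * δx ε t + S t (δx ε t) + ε * w t)
    (hl0 : ∀ ε, δxl ε 0 = 0) (hl : ∀ ε, ∀ t < T, δxl ε (t + 1) = A t * δxl ε t + ε * w t) :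
    ∀ t ≤ T, (fun ε => δx ε t - δxl ε t) =O[𝓝 0] fun ε => ε ^ 2 := by
  have hδx := closedLoop_isBigO_id hS hx0 hx
  refine isBigO_of_linear_recursion (A := A) (by simpa [hx0, hl0] using isBigO_zero _ _)
    fun t ht _ => ((hS t ht).comp_isBigO_pow (hδx t ht.le) tendsto_id).congr_left fun ε => ?_
  rw [hx ε t ht, hl ε t ht]
  ring

end ClosedLoop

/-- Lemma 1, second part: the nonlinear closed-loop perturbation state equals the linear
perturbation state plus the recursively computable quadratic correction `e²`, up to an
`O(ε³)` error as the noise scale `ε → 0`, for every time `t ≤ T`. -/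
theorem closed_loop_perturbation_quadratic_correction_isBigO_cube
    (T : ℕ) (A : ℕ → ℝ) (S : ℕ → ℝ → ℝ)
    (hS : ∀ t < T, ContDiff ℝ 3 (S t))
    (hS0 : ∀ t < T, S t 0 = 0)
    (hS1 : ∀ t < T, deriv (S t) 0 = 0)
    (w : ℕ → ℝ)
    (δx δxl e2 : ℝ → ℕ → ℝ)
    (hx0 : ∀ ε, δx ε 0 = 0)
    (hx : ∀ ε, ∀ t < T, δx ε (t + 1) = A t * δx ε t + S t (δx ε t) + ε * w t)
    (hl0 : ∀ ε, δxl ε 0 = 0)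
    (hl : ∀ ε, ∀ t < T, δxl ε (t + 1) = A t * δxl ε t + ε * w t)
    (he0 : ∀ ε, e2 ε 0 = 0)
    (he : ∀ ε, ∀ t < T, e2 ε (t + 1) =
      A t * e2 ε t + (1 / 2) * iteratedDeriv 2 (S t) 0 * (δxl ε t) ^ 2) :
    ∀ t ≤ T, (fun ε : ℝ => δx ε t - δxl ε t - e2 ε t)
      =O[nhds (0 : ℝ)] (fun ε : ℝ => ε ^ 3) := by
  have hS2 (t : ℕ) (ht : t < T) : S t =O[𝓝 0] fun x => x ^ 2 :=
    isBigO_sq_of_deriv_eq_zero ((hS t ht).of_le (by norm_num)) (hS0 t ht) (hS1 t ht)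
  have hδx := closedLoop_isBigO_id hS2 hx0 hx
  have hδxl := closedLoop_isBigO_id (S := fun _ _ => 0) (fun _ _ => isBigO_zero _ _) hl0
    (by simpa using hl)
  have hdiff := closedLoop_sub_linear_isBigO_sq hS2 hx0 hx hl0 hl
  refine isBigO_of_linear_recursion (A := A) (by simpa [hx0, hl0, he0] using isBigO_zero _ _)
    fun t ht _ => ?_
  set c := iteratedDeriv 2 (S t) 0
  have hremainder := (isBigO_sub_half_iteratedDeriv_two_mul_sq (hS t ht) (hS0 t ht)
    (hS1 t ht)).comp_isBigO_pow (hδx t ht.le) tendsto_id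
  have hcross : (fun ε => 1 / 2 * c * ((δx ε t - δxl ε t) * (δx ε t + δxl ε t)))
      =O[𝓝 0] fun ε : ℝ => ε ^ 3 :=
    (((hdiff t ht.le).mul ((hδx t ht.le).add (hδxl t ht.le))).const_mul_left _).congr_right
      fun ε => by ring
  refine (hremainder.add hcross).congr_left fun ε => ?_
  rw [hx ε t ht, hl ε t ht, he ε t ht]
  ring
end

section
/- If the noise values w_0,…,w_{T−1} are independent real random variables, each with zero mean, zero third moment, and almost surely bounded by a common constant, then the variance of the closed-loop cost satisfies Var[J(ε)] = Var[δJ1(ε)] + O(ε⁴) as ε → 0; that is, ε ↦ Var[J(ε)] − Var[δJ1(ε)] is O(ε⁴) in the neighborhood filter of 0. (Theorem 1, variance part: the variance of the cost under a smooth feedback policy is determined, up to fourth order in ε, solely by the first-order cost perturbation of the linear closed-loop system.) -/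
/-!
Uniformly in `ω` outside a null set (that is, along the filter `𝓝 0 ×ˢ ae μ`), a second-order
Taylor expansion of the closed loop gives `δx_t = ε y_t + ε² z_t + O(ε³)`, where `y` is the linear
response to the noise and `z` the linear response to the quadratic forcing `½ S̄_t''(0) y_t²`.
Hence `J = Σ c̄_t + ε L + ε² Q + O(ε³)`, where `L = δJ1(1)` is linear and `Q` quadratic in the
noise. Writing `J - Σ c̄_t = ε L + D` with `D = ε² Q + O(ε³)`,
`Var J - Var (ε L) = Var D + 2 ε Cov(D, L) = O(ε⁴) + 2 ε³ Cov(Q, L) + O(ε⁴)`, and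
`Cov(Q, L) = E[Q L]` vanishes: it is the mean of a cubic polynomial in independent centred noises
with vanishing third moments.
-/

open Asymptotics Filter MeasureTheory ProbabilityTheory Topology

section Response

variable {E : Type*} [AddCommGroup E] [Module ℝ E] (T : ℕ) (A C : ℕ → ℝ)

def linearResponse (v : ℕ → E) : ℕ → E
  | 0 => 0
  | t + 1 => A t • linearResponse v t + v t

@[simp] lemma linearResponse_zero (v : ℕ → E) : linearResponse A v 0 = 0 := rfl

lemma linearResponse_succ (v : ℕ → E) (t : ℕ) :
    linearResponse A v (t + 1) = A t • linearResponse A v t + v t := rfl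

def firstOrderCost (v : ℕ → E) : E :=
  ∑ t ∈ Finset.range (T + 1), C t • linearResponse A v t

variable {T A C}

lemma linearResponse_mem {v : ℕ → E} {P : Submodule ℝ E} (hv : ∀ t < T, v t ∈ P) :
    ∀ t ≤ T, linearResponse A v t ∈ P
  | 0, _ => P.zero_mem
  | t + 1, ht => P.add_mem (P.smul_mem _ (linearResponse_mem hv t (by omega))) (hv t ht)

lemma firstOrderCost_mem {v : ℕ → E} {P : Submodule ℝ E} (hv : ∀ t < T, v t ∈ P) :
    firstOrderCost T A C v ∈ P :=
  P.sum_mem fun t ht =>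
    P.smul_mem _ (linearResponse_mem hv t (Nat.lt_succ_iff.1 (Finset.mem_range.1 ht)))

lemma eq_smul_linearResponse {v x : ℕ → E} {c : ℝ} (h0 : x 0 = 0)
    (h : ∀ t < T, x (t + 1) = A t • x t + c • v t) : ∀ t ≤ T, x t = c • linearResponse A v t
  | 0, _ => by simp [h0]
  | t + 1, ht => by
    rw [h t ht, eq_smul_linearResponse h0 h t (by omega), linearResponse_succ, smul_add,
      smul_comm]

lemma sum_smul_eq_smul_firstOrderCost {v x : ℕ → E} {c : ℝ} (h0 : x 0 = 0)
    (h : ∀ t < T, x (t + 1) = A t • x t + c • v t) :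
    ∑ t ∈ Finset.range (T + 1), C t • x t = c • firstOrderCost T A C v := by
  rw [firstOrderCost, Finset.smul_sum]
  refine Finset.sum_congr rfl fun t ht => ?_
  rw [eq_smul_linearResponse h0 h t (Nat.lt_succ_iff.1 (Finset.mem_range.1 ht)), smul_comm]

lemma linearResponse_comp {β γ : Type*} (v : ℕ → γ → ℝ) (f : β → γ) (t : ℕ) :
    linearResponse A (fun s => v s ∘ f) t = linearResponse A v t ∘ f := by
  induction t with
  | zero => rfl
  | succ t ih => simp only [linearResponse_succ, ih]; rfl

lemma firstOrderCost_comp {β γ : Type*} (v : ℕ → γ → ℝ) (f : β → γ) :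
    firstOrderCost T A C (fun s => v s ∘ f) = firstOrderCost T A C v ∘ f := by
  ext p
  simp [firstOrderCost, linearResponse_comp, Finset.sum_apply]

end Response

noncomputable def quadCoeff (f : ℝ → ℝ) : ℝ := iteratedDeriv 2 f 0 / 2

lemma isBigO_sub_quadCoeff_mul_sq {f : ℝ → ℝ} (hf : ContDiff ℝ 3 f) (h0 : f 0 = 0)
    (h1 : deriv f 0 = 0) : (fun x => f x - quadCoeff f * x ^ 2) =O[𝓝 0] fun x => x ^ 3 := by
  have htaylor := (taylor_isLittleO_univ (x₀ := 0) hf).isBigO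
  simp only [sub_zero] at htaylor
  have hcubic : (fun x : ℝ => iteratedDeriv 3 f 0 / 6 * x ^ 3) =O[𝓝 0] fun x => x ^ 3 :=
    (isBigO_refl _ _).const_mul_left _
  refine (htaylor.add hcubic).congr_left fun x => ?_
  simp only [taylorWithinEval_succ, taylor_within_zero_eval, h0, CharP.cast_eq_zero, zero_add,
    Nat.factorial, Nat.cast_one, mul_one, inv_one, sub_zero, pow_one, one_mul,
    iteratedDerivWithin_univ, iteratedDeriv_one, h1, smul_eq_mul, mul_zero, add_zero,
    Nat.succ_eq_add_one, Nat.reduceAdd, Nat.cast_ofNat, mul_inv_rev, quadCoeff]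
  ring

section SecondOrder

variable {E : Type*} [Ring E] [Algebra ℝ E] (T : ℕ) (A : ℕ → ℝ) (S : ℕ → ℝ → ℝ) (C : ℕ → ℝ)
  (H : ℕ → ℝ → ℝ)

noncomputable def secondOrderResponse (v : ℕ → E) : ℕ → E :=
  linearResponse A fun t => quadCoeff (S t) • (linearResponse A v t * linearResponse A v t)

lemma secondOrderResponse_succ (v : ℕ → E) (t : ℕ) :
    secondOrderResponse A S v (t + 1) = A t • secondOrderResponse A S v t +
      quadCoeff (S t) • (linearResponse A v t * linearResponse A v t) := rfl

noncomputable def secondOrderCost (v : ℕ → E) : E :=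
  ∑ t ∈ Finset.range (T + 1), (C t • secondOrderResponse A S v t +
    quadCoeff (H t) • (linearResponse A v t * linearResponse A v t))

variable {T A S C H}

lemma secondOrderResponse_mem {v : ℕ → E} {P : Submodule ℝ E} (hv : ∀ t < T, v t ∈ P) :
    ∀ t ≤ T, secondOrderResponse A S v t ∈ P * P :=
  linearResponse_mem fun t ht => Submodule.smul_mem _ _ <|
    Submodule.mul_mem_mul (linearResponse_mem hv t ht.le) (linearResponse_mem hv t ht.le)

lemma secondOrderCost_mem {v : ℕ → E} {P : Submodule ℝ E} (hv : ∀ t < T, v t ∈ P) :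
    secondOrderCost T A S C H v ∈ P * P :=
  Submodule.sum_mem _ fun t ht => by
    have htT := Nat.lt_succ_iff.1 (Finset.mem_range.1 ht)
    exact add_mem (Submodule.smul_mem _ _ (secondOrderResponse_mem hv t htT))
      (Submodule.smul_mem _ _ (Submodule.mul_mem_mul (linearResponse_mem hv t htT)
        (linearResponse_mem hv t htT)))

lemma secondOrderResponse_comp {β γ : Type*} (v : ℕ → γ → ℝ) (f : β → γ) (t : ℕ) :
    secondOrderResponse A S (fun s => v s ∘ f) t = secondOrderResponse A S v t ∘ f := by
  simp only [secondOrderResponse, linearResponse_comp]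
  exact linearResponse_comp
    (fun s => quadCoeff (S s) • (linearResponse A v s * linearResponse A v s)) f t

lemma secondOrderCost_comp {β γ : Type*} (v : ℕ → γ → ℝ) (f : β → γ) :
    secondOrderCost T A S C H (fun s => v s ∘ f) = secondOrderCost T A S C H v ∘ f := by
  ext p
  simp [secondOrderCost, linearResponse_comp, secondOrderResponse_comp, Finset.sum_apply]

end SecondOrder

section Expansion

variable {α : Type*} {l : Filter α} {e : α → ℝ}

lemma isBigO_pow_succ_pow (he : Tendsto e l (𝓝 0)) (n : ℕ) :
    (fun p => e p ^ (n + 1)) =O[l] fun p => e p ^ n := by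
  simpa [pow_succ] using (isBigO_refl (fun p => e p ^ n) l).mul (he.isBigO_one ℝ)

lemma isBigO_sub_mul_of_isBigO_sub_mul_sub {X y z : α → ℝ} (he : Tendsto e l (𝓝 0))
    (hz : BoundedAtFilter l z)
    (h : (fun p => X p - e p * y p - e p ^ 2 * z p) =O[l] fun p => e p ^ 3) :
    (fun p => X p - e p * y p) =O[l] fun p => e p ^ 2 := by
  have hz' : (fun p => e p ^ 2 * z p) =O[l] fun p => e p ^ 2 := by
    simpa using (isBigO_refl (fun p => e p ^ 2) l).mul hz
  exact ((h.trans (isBigO_pow_succ_pow he 2)).add hz').congr_left fun p => by ring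

lemma isBigO_comp_sub_quadCoeff_mul_sq {f : ℝ → ℝ} (hf : ContDiff ℝ 3 f) (h0 : f 0 = 0)
    (h1 : deriv f 0 = 0) {X y : α → ℝ} (he : Tendsto e l (𝓝 0)) (hy : BoundedAtFilter l y)
    (hX : (fun p => X p - e p * y p) =O[l] fun p => e p ^ 2) :
    (fun p => f (X p) - quadCoeff f * (e p * y p) ^ 2) =O[l] fun p => e p ^ 3 := by
  have hey : (fun p => e p * y p) =O[l] e := by
    simpa using (isBigO_refl e l).mul hy
  have hXe : X =O[l] e := by
    have := (hX.trans (by simpa using isBigO_pow_succ_pow he 1)).add hey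
    exact this.congr_left fun p => by ring
  have hsum : (fun p => X p + e p * y p) =O[l] e := hXe.add hey
  have htaylor := (isBigO_sub_quadCoeff_mul_sq hf h0 h1).comp_tendsto (hXe.trans_tendsto he)
  refine ((htaylor.trans (hXe.pow 3)).add
    ((hX.mul hsum).const_mul_left (quadCoeff f))).congr' ?_ ?_
  · exact Eventually.of_forall fun p => by simp only [Function.comp_apply]; ring
  · exact Eventually.of_forall fun p => by ring

variable {T : ℕ} {A : ℕ → ℝ} {S : ℕ → ℝ → ℝ} {v X : ℕ → α → ℝ}

lemma boundedAtFilter_linearResponse (hv : ∀ t < T, BoundedAtFilter l (v t)) {t : ℕ}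
    (ht : t ≤ T) : BoundedAtFilter l (linearResponse A v t) :=
  linearResponse_mem (A := A) (v := v) (P := Subalgebra.toSubmodule (boundedFilterSubalgebra ℝ l))
    hv t ht

lemma boundedAtFilter_secondOrderResponse (hv : ∀ t < T, BoundedAtFilter l (v t)) {t : ℕ}
    (ht : t ≤ T) : BoundedAtFilter l (secondOrderResponse A S v t) := by
  have := secondOrderResponse_mem (A := A) (S := S) (v := v)
    (P := Subalgebra.toSubmodule (boundedFilterSubalgebra ℝ l)) hv t ht
  rwa [(boundedFilterSubalgebra ℝ l).isIdempotentElem_toSubmodule.eq] at this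

lemma isBigO_closedLoop_sub_secondOrderResponse (he : Tendsto e l (𝓝 0))
    (hv : ∀ t < T, BoundedAtFilter l (v t)) (hS : ∀ t < T, ContDiff ℝ 3 (S t))
    (hS0 : ∀ t < T, S t 0 = 0) (hS1 : ∀ t < T, deriv (S t) 0 = 0) (hX0 : ∀ p, X 0 p = 0)
    (hX : ∀ t < T, ∀ p, X (t + 1) p = A t * X t p + S t (X t p) + e p * v t p) :
    ∀ t ≤ T, (fun p => X t p - e p * linearResponse A v t p -
      e p ^ 2 * secondOrderResponse A S v t p) =O[l] fun p => e p ^ 3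
  | 0, _ => by simpa [hX0, secondOrderResponse] using isBigO_zero _ _
  | t + 1, ht => by
    have ih := isBigO_closedLoop_sub_secondOrderResponse he hv hS hS0 hS1 hX0 hX t (by omega)
    have hquad := isBigO_comp_sub_quadCoeff_mul_sq (hS t ht) (hS0 t ht) (hS1 t ht) he
      (boundedAtFilter_linearResponse hv (by omega))
      (isBigO_sub_mul_of_isBigO_sub_mul_sub he
        (boundedAtFilter_secondOrderResponse hv (by omega)) ih)
    refine ((ih.const_mul_left (A t)).add hquad).congr_left fun p => ?_
    simp only [hX t ht p, linearResponse_succ, secondOrderResponse_succ, Pi.add_apply,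
      Pi.smul_apply, Pi.mul_apply, smul_eq_mul]
    ring

lemma isBigO_cost_sub_secondOrderCost (he : Tendsto e l (𝓝 0))
    (hv : ∀ t < T, BoundedAtFilter l (v t)) (hS : ∀ t < T, ContDiff ℝ 3 (S t))
    (hS0 : ∀ t < T, S t 0 = 0) (hS1 : ∀ t < T, deriv (S t) 0 = 0) (hX0 : ∀ p, X 0 p = 0)
    (hX : ∀ t < T, ∀ p, X (t + 1) p = A t * X t p + S t (X t p) + e p * v t p)
    (C : ℕ → ℝ) {H : ℕ → ℝ → ℝ} (hH : ∀ t ≤ T, ContDiff ℝ 3 (H t))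
    (hH0 : ∀ t ≤ T, H t 0 = 0) (hH1 : ∀ t ≤ T, deriv (H t) 0 = 0) :
    (fun p => ∑ t ∈ Finset.range (T + 1), (C t * X t p + H t (X t p))
      - e p * firstOrderCost T A C v p - e p ^ 2 * secondOrderCost T A S C H v p)
      =O[l] fun p => e p ^ 3 := by
  have hterm : ∀ t ∈ Finset.range (T + 1),
      (fun p => C t * (X t p - e p * linearResponse A v t p -
        e p ^ 2 * secondOrderResponse A S v t p) +
        (H t (X t p) - quadCoeff (H t) * (e p * linearResponse A v t p) ^ 2))
        =O[l] fun p => e p ^ 3 := by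
    intro t ht
    have htT : t ≤ T := Nat.lt_succ_iff.1 (Finset.mem_range.1 ht)
    have hexp := isBigO_closedLoop_sub_secondOrderResponse he hv hS hS0 hS1 hX0 hX t htT
    exact (hexp.const_mul_left (C t)).add <|
      isBigO_comp_sub_quadCoeff_mul_sq (hH t htT) (hH0 t htT) (hH1 t htT) he
        (boundedAtFilter_linearResponse hv htT)
        (isBigO_sub_mul_of_isBigO_sub_mul_sub he (boundedAtFilter_secondOrderResponse hv htT)
          hexp)
  refine (IsBigO.sum hterm).congr_left fun p => ?_
  simp only [firstOrderCost, secondOrderCost, Finset.sum_apply, Pi.add_apply, Pi.smul_apply,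
    Pi.mul_apply, smul_eq_mul, Finset.mul_sum, ← Finset.sum_sub_distrib]
  exact Finset.sum_congr rfl fun t _ => by ring

end Expansion

section Moments

variable {Ω : Type*} [MeasurableSpace Ω] {μ : Measure Ω}

def essBoundedSubalgebra (μ : Measure Ω) : Subalgebra ℝ (Ω → ℝ) where
  carrier := {f | AEStronglyMeasurable f μ ∧ BoundedAtFilter (ae μ) f}
  mul_mem' hf hg := ⟨hf.1.mul hg.1, hf.2.mul hg.2⟩
  add_mem' hf hg := ⟨hf.1.add hg.1, hf.2.add hg.2⟩
  algebraMap_mem' c := ⟨aestronglyMeasurable_const, const_boundedAtFilter _ c⟩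

lemma exists_ae_abs_le_of_mem_essBounded {f : Ω → ℝ} (hf : f ∈ essBoundedSubalgebra μ) :
    ∃ c, ∀ᵐ ω ∂μ, |f ω| ≤ c := by
  obtain ⟨c, hc⟩ := hf.2.bound
  exact ⟨c, by simpa using hc⟩

lemma memLp_of_mem_essBounded [IsFiniteMeasure μ] {f : Ω → ℝ}
    (hf : f ∈ essBoundedSubalgebra μ) (p : ENNReal) : MemLp f p μ := by
  obtain ⟨c, hc⟩ := exists_ae_abs_le_of_mem_essBounded hf
  exact (memLp_top_of_bound hf.1 c hc).mono_exponent le_top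

def zeroMeanSubmodule (μ : Measure Ω) : Submodule ℝ (Ω → ℝ) where
  carrier := {f | Integrable f μ ∧ ∫ ω, f ω ∂μ = 0}
  add_mem' hf hg := ⟨hf.1.add hg.1, by simp [integral_add hf.1 hg.1, hf.2, hg.2]⟩
  zero_mem' := ⟨integrable_zero _ _ _, integral_zero _ _⟩
  smul_mem' c _ hf := ⟨hf.1.smul c, by simp [integral_const_mul, hf.2]⟩

variable {ι : Type*} {X : ι → Ω → ℝ}

lemma integral_mul_mul_eq_zero (hind : iIndepFun X μ) (hmeas : ∀ i, Measurable (X i))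
    (hmean : ∀ i, ∫ ω, X i ω ∂μ = 0) (hthird : ∀ i, ∫ ω, X i ω ^ 3 ∂μ = 0) (i j k : ι) :
    ∫ ω, X i ω * X j ω * X k ω ∂μ = 0 := by
  have hsep : ∀ i j k, k ≠ i → k ≠ j → ∫ ω, X i ω * X j ω * X k ω ∂μ = 0 := by
    intro i j k hki hkj
    have hind' : IndepFun (fun ω => X i ω * X j ω) (X k) μ :=
      (hind.indepFun_prodMk hmeas i j k hki.symm hkj.symm).comp
        (measurable_fst.mul measurable_snd) measurable_id
    have := hind'.integral_mul_eq_mul_integral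
      ((hmeas i).mul (hmeas j)).aestronglyMeasurable (hmeas k).aestronglyMeasurable
    simpa [hmean k] using this
  -- unless `i = j = k`, some index differs from the other two
  by_cases hki : k = i
  · subst hki
    by_cases hjk : j = k
    · subst hjk
      simpa [pow_three'] using hthird j
    · calc _ = ∫ ω, X k ω * X k ω * X j ω ∂μ := by congr 1; ext ω; ring
        _ = 0 := hsep k k j hjk hjk
  · by_cases hkj : k = j
    · subst hkj
      calc _ = ∫ ω, X k ω * X k ω * X i ω ∂μ := by congr 1; ext ω; ring
        _ = 0 := hsep k k i (Ne.symm hki) (Ne.symm hki)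
    · exact hsep i j k hki hkj

lemma span_le_essBoundedSubalgebra (hX : ∀ i, X i ∈ essBoundedSubalgebra μ) :
    Submodule.span ℝ (Set.range X) ≤ Subalgebra.toSubmodule (essBoundedSubalgebra μ) :=
  Submodule.span_le.2 <| Set.range_subset_iff.2 hX

lemma span_mul_span_le_essBoundedSubalgebra (hX : ∀ i, X i ∈ essBoundedSubalgebra μ) :
    Submodule.span ℝ (Set.range X) * Submodule.span ℝ (Set.range X) ≤
      Subalgebra.toSubmodule (essBoundedSubalgebra μ) := by
  have := mul_le_mul' (span_le_essBoundedSubalgebra hX) (span_le_essBoundedSubalgebra hX)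
  rwa [(essBoundedSubalgebra μ).isIdempotentElem_toSubmodule.eq] at this

lemma span_le_zeroMeanSubmodule [IsFiniteMeasure μ] (hX : ∀ i, X i ∈ essBoundedSubalgebra μ)
    (hmean : ∀ i, ∫ ω, X i ω ∂μ = 0) :
    Submodule.span ℝ (Set.range X) ≤ zeroMeanSubmodule μ := by
  rw [Submodule.span_le]
  rintro _ ⟨i, rfl⟩
  exact ⟨(memLp_of_mem_essBounded (hX i) 1).integrable le_rfl, hmean i⟩

lemma span_mul_span_mul_span_le_zeroMeanSubmodule [IsFiniteMeasure μ] (hind : iIndepFun X μ)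
    (hmeas : ∀ i, Measurable (X i)) (hX : ∀ i, X i ∈ essBoundedSubalgebra μ)
    (hmean : ∀ i, ∫ ω, X i ω ∂μ = 0) (hthird : ∀ i, ∫ ω, X i ω ^ 3 ∂μ = 0) :
    Submodule.span ℝ (Set.range X) * Submodule.span ℝ (Set.range X) *
      Submodule.span ℝ (Set.range X) ≤ zeroMeanSubmodule μ := by
  rw [Submodule.span_mul_span, Submodule.span_mul_span, Submodule.span_le]
  rintro _ ⟨_, ⟨_, ⟨i, rfl⟩, _, ⟨j, rfl⟩, rfl⟩, _, ⟨k, rfl⟩, rfl⟩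
  have hprod := (essBoundedSubalgebra μ).mul_mem
    ((essBoundedSubalgebra μ).mul_mem (hX i) (hX j)) (hX k)
  exact ⟨(memLp_of_mem_essBounded hprod 1).integrable le_rfl,
    integral_mul_mul_eq_zero hind hmeas hmean hthird i j k⟩

lemma covariance_eq_zero_of_mem_span_mul_span [IsProbabilityMeasure μ] (hind : iIndepFun X μ)
    (hmeas : ∀ i, Measurable (X i)) (hX : ∀ i, X i ∈ essBoundedSubalgebra μ)
    (hmean : ∀ i, ∫ ω, X i ω ∂μ = 0) (hthird : ∀ i, ∫ ω, X i ω ^ 3 ∂μ = 0) {Q L : Ω → ℝ}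
    (hQ : Q ∈ Submodule.span ℝ (Set.range X) * Submodule.span ℝ (Set.range X))
    (hL : L ∈ Submodule.span ℝ (Set.range X)) : cov[Q, L; μ] = 0 := by
  rw [covariance_eq_sub (memLp_of_mem_essBounded (span_mul_span_le_essBoundedSubalgebra hX hQ) 2)
    (memLp_of_mem_essBounded (span_le_essBoundedSubalgebra hX hL) 2),
    (span_mul_span_mul_span_le_zeroMeanSubmodule hind hmeas hX hmean hthird
      (Submodule.mul_mem_mul hQ hL)).2, (span_le_zeroMeanSubmodule hX hmean hL).2]
  simp

end Moments

section Variance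

variable {Ω : Type*} [MeasurableSpace Ω] {μ : Measure Ω} [IsProbabilityMeasure μ]

lemma variance_le_sq_of_abs_le {X : Ω → ℝ} {a : ℝ} (hX : AEMeasurable X μ)
    (h : ∀ᵐ ω ∂μ, |X ω| ≤ a) : Var[X; μ] ≤ a ^ 2 := by
  have := variance_le_sq_of_bounded (a := -a) (b := a)
    (by filter_upwards [h] with ω hω using abs_le.1 hω) hX
  rwa [show (a - -a) / 2 = a by ring] at this

lemma abs_covariance_le_of_abs_le {X Y : Ω → ℝ} {a b : ℝ} (hX : AEStronglyMeasurable X μ)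
    (hY : AEStronglyMeasurable Y μ) (ha : ∀ᵐ ω ∂μ, |X ω| ≤ a) (hb : ∀ᵐ ω ∂μ, |Y ω| ≤ b) :
    |cov[X, Y; μ]| ≤ 2 * (a * b) := by
  rw [covariance_eq_sub ((memLp_top_of_bound hX a ha).mono_exponent le_top)
    ((memLp_top_of_bound hY b hb).mono_exponent le_top)]
  have hXY : |∫ ω, (X * Y) ω ∂μ| ≤ a * b := by
    simpa using norm_integral_le_of_norm_le_const (μ := μ) (f := X * Y) <| by
      filter_upwards [ha, hb] with ω h1 h2
      simpa [abs_mul] using mul_le_mul h1 h2 (abs_nonneg _) ((abs_nonneg _).trans h1)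
  have hXa : |∫ ω, X ω ∂μ| ≤ a := by
    simpa using norm_integral_le_of_norm_le_const (μ := μ) (f := X) ha
  have hYb : |∫ ω, Y ω ∂μ| ≤ b := by
    simpa using norm_integral_le_of_norm_le_const (μ := μ) (f := Y) hb
  calc _ ≤ |∫ ω, (X * Y) ω ∂μ| + |∫ ω, X ω ∂μ| * |∫ ω, Y ω ∂μ| := by
        rw [← abs_mul]; exact abs_sub _ _
    _ ≤ a * b + a * b :=
        add_le_add hXY (mul_le_mul hXa hYb (abs_nonneg _) ((abs_nonneg _).trans hXa))
    _ = 2 * (a * b) := by ring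

lemma variance_const_add_add_sub_variance {X Y Z : Ω → ℝ} (hX : MemLp X 2 μ) (hY : MemLp Y 2 μ)
    (hZ : MemLp Z 2 μ) (hXZ : cov[X, Z; μ] = 0) (k : ℝ) :
    Var[fun ω => k + (X ω + Y ω + Z ω); μ] - Var[Z; μ] = Var[X + Y; μ] + 2 * cov[Y, Z; μ] := by
  rw [show (fun ω => k + (X ω + Y ω + Z ω)) = fun ω => k + (X + Y + Z) ω from rfl,
    variance_const_add ((hX.add hY).add hZ).aestronglyMeasurable,
    variance_add (hX.add hY) hZ, covariance_add_left hX hY hZ, hXZ]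
  ring

lemma abs_variance_sub_variance_le {J L Q : Ω → ℝ} {k ε M bL bQ : ℝ}
    (hJ : AEStronglyMeasurable J μ) (hL : AEStronglyMeasurable L μ)
    (hQ : AEStronglyMeasurable Q μ) (hbL : ∀ᵐ ω ∂μ, |L ω| ≤ bL) (hbQ : ∀ᵐ ω ∂μ, |Q ω| ≤ bQ)
    (hQL : cov[Q, L; μ] = 0) (hM0 : 0 ≤ M) (hε : |ε| ≤ 1)
    (hR : ∀ᵐ ω ∂μ, |J ω - k - ε * L ω - ε ^ 2 * Q ω| ≤ M * |ε| ^ 3) :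
    |Var[J; μ] - Var[fun ω => ε * L ω; μ]| ≤ ((bQ + M) ^ 2 + 4 * (M * bL)) * |ε| ^ 4 := by
  set R : Ω → ℝ := fun ω => J ω - k - ε * L ω - ε ^ 2 * Q ω
  have hRm : AEStronglyMeasurable R μ :=
    ((hJ.sub aestronglyMeasurable_const).sub (hL.const_mul ε)).sub (hQ.const_mul _)
  have hQ2 := ((memLp_top_of_bound hQ bQ hbQ).mono_exponent le_top).const_mul (p := 2) (ε ^ 2)
  have hcov : cov[fun ω => ε ^ 2 * Q ω, fun ω => ε * L ω; μ] = 0 := by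
    rw [covariance_const_mul_left, covariance_const_mul_right, hQL, mul_zero, mul_zero]
  have hdecomp : J = fun ω => k + (ε ^ 2 * Q ω + R ω + ε * L ω) := by
    ext ω; simp only [R]; ring
  rw [hdecomp, variance_const_add_add_sub_variance hQ2
    ((memLp_top_of_bound hRm _ hR).mono_exponent le_top)
    (((memLp_top_of_bound hL bL hbL).mono_exponent le_top).const_mul ε) hcov,
    covariance_const_mul_right]
  have hvar : Var[(fun ω => ε ^ 2 * Q ω) + R; μ] ≤ ((bQ + M) * ε ^ 2) ^ 2 := by
    refine variance_le_sq_of_abs_le (hQ2.1.add hRm).aemeasurable ?_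
    filter_upwards [hbQ, hR] with ω hQω hRω
    have hε3 : |ε| ^ 3 ≤ ε ^ 2 := by
      rw [← sq_abs]; exact pow_le_pow_of_le_one (abs_nonneg ε) hε (by norm_num)
    calc |ε ^ 2 * Q ω + R ω| ≤ ε ^ 2 * |Q ω| + |R ω| :=
          (abs_add_le _ _).trans_eq (by rw [abs_mul, abs_sq])
      _ ≤ ε ^ 2 * bQ + M * ε ^ 2 := add_le_add (mul_le_mul_of_nonneg_left hQω (sq_nonneg _))
          (hRω.trans (mul_le_mul_of_nonneg_left hε3 hM0))
      _ = (bQ + M) * ε ^ 2 := by ring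
  have hcovR := abs_covariance_le_of_abs_le hRm hL hR hbL
  calc _ ≤ |Var[(fun ω => ε ^ 2 * Q ω) + R; μ]| + 2 * (|ε| * |cov[R, L; μ]|) :=
        (abs_add_le _ _).trans_eq (by rw [abs_mul, abs_mul, abs_two])
    _ ≤ ((bQ + M) * ε ^ 2) ^ 2 + 2 * (|ε| * (2 * (M * |ε| ^ 3 * bL))) := by
        rw [abs_of_nonneg (variance_nonneg _ _)]; gcongr
    _ = ((bQ + M) ^ 2 + 4 * (M * bL)) * |ε| ^ 4 := by rw [← sq_abs ε]; ring

lemma isBigO_variance_sub_variance {J : ℝ → Ω → ℝ} {k : ℝ} {L Q : Ω → ℝ}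
    (hJ : ∀ ε, AEStronglyMeasurable (J ε) μ) (hL : L ∈ essBoundedSubalgebra μ)
    (hQ : Q ∈ essBoundedSubalgebra μ) (hQL : cov[Q, L; μ] = 0)
    (hexp : (fun p : ℝ × Ω => J p.1 p.2 - k - p.1 * L p.2 - p.1 ^ 2 * Q p.2)
      =O[𝓝 0 ×ˢ ae μ] fun p => p.1 ^ 3) :
    (fun ε => Var[J ε; μ] - Var[fun ω => ε * L ω; μ]) =O[𝓝 0] fun ε => ε ^ 4 := by
  obtain ⟨M, hM0, hM⟩ := hexp.exists_nonneg
  obtain ⟨bL, hbL⟩ := exists_ae_abs_le_of_mem_essBounded hL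
  obtain ⟨bQ, hbQ⟩ := exists_ae_abs_le_of_mem_essBounded hQ
  have hsmall : ∀ᶠ ε : ℝ in 𝓝 0, |ε| ≤ 1 := by
    filter_upwards [Metric.closedBall_mem_nhds (0 : ℝ) one_pos] with ε hε
    simpa using hε
  refine IsBigO.of_bound ((bQ + M) ^ 2 + 4 * (M * bL)) ?_
  filter_upwards [hM.bound.curry, hsmall] with ε hR hε
  rw [Real.norm_eq_abs, Real.norm_eq_abs, abs_pow]
  exact abs_variance_sub_variance_le (hJ ε) hL.1 hQ.1 hbL hbQ hQL hM0 hε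
    (by simpa [abs_pow] using hR)

end Variance

section ClosedLoop

variable {Ω : Type*} [MeasurableSpace Ω] {T : ℕ}

lemma measurable_closedLoop {A : ℕ → ℝ} {S : ℕ → ℝ → ℝ} {w x : ℕ → Ω → ℝ} {ε : ℝ}
    (hS : ∀ t < T, Continuous (S t)) (hw : ∀ t < T, Measurable (w t)) (hx0 : ∀ ω, x 0 ω = 0)
    (hx : ∀ t < T, ∀ ω, x (t + 1) ω = A t * x t ω + S t (x t ω) + ε * w t ω) :
    ∀ t ≤ T, Measurable (x t)
  | 0, _ => by rw [show x 0 = fun _ => 0 from funext hx0]; exact measurable_const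
  | t + 1, ht => by
    have ih := measurable_closedLoop hS hw hx0 hx t (by omega)
    rw [show x (t + 1) = _ from funext (hx t ht)]
    exact ((ih.const_mul _).add ((hS t ht).measurable.comp ih)).add ((hw t ht).const_mul ε)

lemma measurable_cost {x : ℕ → Ω → ℝ} (hx : ∀ t ≤ T, Measurable (x t)) (c C : ℕ → ℝ)
    {H : ℕ → ℝ → ℝ} (hH : ∀ t ≤ T, Continuous (H t)) :
    Measurable fun ω => ∑ t ∈ Finset.range (T + 1), (c t + C t * x t ω + H t (x t ω)) :=
  Finset.measurable_sum _ fun t ht => by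
    have htT := Nat.lt_succ_iff.1 (Finset.mem_range.1 ht)
    exact (measurable_const.add ((hx t htT).const_mul _)).add
      ((hH t htT).measurable.comp (hx t htT))

end ClosedLoop

/-- Theorem 1, variance part: for independent noises with zero mean, zero third moment and
a.s. uniform bound, the variance of the closed-loop cost satisfies
`Var[J(ε)] = Var[δJ1(ε)] + O(ε⁴)` as `ε → 0`, where `δJ1` is the first-order cost
perturbation of the linear closed-loop system. -/
theorem variance_cost_eq_variance_linear_add_isBigO_fourth
    {Ω : Type*} [MeasurableSpace Ω] (μ : Measure Ω) [IsProbabilityMeasure μ]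
    (T : ℕ) (A : ℕ → ℝ) (S : ℕ → ℝ → ℝ)
    (hS : ∀ t < T, ContDiff ℝ 3 (S t))
    (hS0 : ∀ t < T, S t 0 = 0)
    (hS1 : ∀ t < T, deriv (S t) 0 = 0)
    (w : ℕ → Ω → ℝ) (hmeas : ∀ t < T, Measurable (w t))
    (hindep : ProbabilityTheory.iIndepFun (fun t : Fin T => w t) μ)
    (hmean : ∀ t < T, ∫ ω, w t ω ∂μ = 0)
    (hthird : ∀ t < T, ∫ ω, (w t ω) ^ 3 ∂μ = 0)
    (Cbd : ℝ) (hbd : ∀ t < T, ∀ᵐ ω ∂μ, |w t ω| ≤ Cbd)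
    (δx δxl : ℝ → ℕ → Ω → ℝ)
    (hx0 : ∀ ε ω, δx ε 0 ω = 0)
    (hx : ∀ ε, ∀ t < T, ∀ ω, δx ε (t + 1) ω = A t * δx ε t ω + S t (δx ε t ω) + ε * w t ω)
    (hl0 : ∀ ε ω, δxl ε 0 ω = 0)
    (hl : ∀ ε, ∀ t < T, ∀ ω, δxl ε (t + 1) ω = A t * δxl ε t ω + ε * w t ω)
    (c C : ℕ → ℝ) (H : ℕ → ℝ → ℝ)
    (hH : ∀ t ≤ T, ContDiff ℝ 3 (H t))
    (hH0 : ∀ t ≤ T, H t 0 = 0)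
    (hH1 : ∀ t ≤ T, deriv (H t) 0 = 0) :
    (fun ε : ℝ =>
        ProbabilityTheory.variance
          (fun ω => ∑ t ∈ Finset.range (T + 1), (c t + C t * δx ε t ω + H t (δx ε t ω))) μ
        - ProbabilityTheory.variance
          (fun ω => ∑ t ∈ Finset.range (T + 1), C t * δxl ε t ω) μ)
      =O[nhds (0 : ℝ)] (fun ε : ℝ => ε ^ 4) := by
  set X : Fin T → Ω → ℝ := fun i => w i
  have hwB : ∀ t < T, w t ∈ essBoundedSubalgebra μ := fun t ht =>
    ⟨(hmeas t ht).aestronglyMeasurable,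
      IsBigO.of_bound Cbd (by filter_upwards [hbd t ht] with ω h; simpa using h)⟩
  have hXB : ∀ i, X i ∈ essBoundedSubalgebra μ := fun i => hwB i i.2
  have hwX : ∀ t < T, w t ∈ Submodule.span ℝ (Set.range X) := fun t ht =>
    Submodule.subset_span ⟨⟨t, ht⟩, rfl⟩
  have hcov : cov[secondOrderCost T A S C H w, firstOrderCost T A C w; μ] = 0 :=
    covariance_eq_zero_of_mem_span_mul_span hindep (fun i => hmeas i i.2) hXB
      (fun i => hmean i i.2) (fun i => hthird i i.2) (secondOrderCost_mem hwX)
      (firstOrderCost_mem hwX)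
  have hJ := fun ε => (measurable_cost (measurable_closedLoop (fun t ht => (hS t ht).continuous)
    hmeas (hx0 ε) (hx ε)) c C fun t ht => (hH t ht).continuous).aestronglyMeasurable (μ := μ)
  have hexp := isBigO_cost_sub_secondOrderCost (X := fun t p => δx p.1 t p.2) tendsto_fst
    (fun t ht => (hwB t ht).2.comp_tendsto tendsto_snd) hS hS0 hS1 (fun p => hx0 p.1 p.2)
    (fun t ht p => hx p.1 t ht p.2) C hH hH0 hH1
  have hlin : ∀ ε, (fun ω => ∑ t ∈ Finset.range (T + 1), C t * δxl ε t ω) =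
      fun ω => ε * firstOrderCost T A C w ω := fun ε => by
    ext ω
    simpa [Finset.sum_apply] using congrFun (sum_smul_eq_smul_firstOrderCost (C := C)
      (funext (hl0 ε)) fun t ht => funext (hl ε t ht)) ω
  refine (isBigO_variance_sub_variance (k := ∑ t ∈ Finset.range (T + 1), c t) hJ
    (span_le_essBoundedSubalgebra hXB (firstOrderCost_mem hwX))
    (span_mul_span_le_essBoundedSubalgebra hXB (secondOrderCost_mem hwX)) hcov
    (hexp.congr_left fun p => ?_)).congr_left fun ε => by rw [hlin ε]
  simp only [firstOrderCost_comp, secondOrderCost_comp, Function.comp_apply, add_assoc,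
    Finset.sum_add_distrib]
  ring
end
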